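/- Let T be a finite rooted tree in which every node v is labeled by a nonempty finite set S(v) of size at most k, drawn from some ambient set X, satisfying the 'laminar-path' condition: for any three nodes u, v, w on a root-to-leaf path listed in order from leaf toward root (u below v below w), S(u) ∩ S(w) ⊆ S(u) ∩ S(v). Fix Z ∈ ℕ and suppose some root-to-leaf path contains Z^k consecutive nodes v_1, ..., v_{Z^k} (each the parent of the previous) such that the intersection of all S(v_i) is nonempty. Then there exist Z nodes among v_1, ..., v_{Z^k} and a set S₀ with |S₀| ≤ k such that the pairwise intersection of the label sets of any two of these Z chosen nodes equals S₀. -/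

import Mathlib

/-!
Induct on `k`. Let `C` be the common intersection of all `Z^(k+1)` sets (nonempty by hypothesis)
and cut the path into `Z` blocks of length `Z^k`, with first elements `e 0, …, e (Z-1)`. If
consecutive block starts always meet exactly in `C`, laminarity forces any two of them to meet
exactly in `C`, and the block starts are the required `Z` sets. Otherwise two consecutive starts
share an element outside `C`; by laminarity it lies in every set of the block in between, and the
sets of that block with `C` removed have size at most `k`, so induction applies to them, and
adding `C` back to the kernel they give yields the answer.
-/

open Finset

section

variable {X ι κ : Type*} [DecidableEq X]

/-- Condition (2) of Definition 4.7 along a path: intersections with `S i` shrink as one moves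
away from `i`. -/
def IsLaminar [Preorder ι] (S : ι → Finset X) : Prop :=
  ∀ ⦃i j₁ j₂⦄, i < j₁ → j₁ < j₂ → S i ∩ S j₂ ⊆ S i ∩ S j₁

def IsSunflower (T : ι → Finset X) (K : Finset X) : Prop :=
  (∀ i, K ⊆ T i) ∧ Pairwise fun i j => T i ∩ T j = K

namespace IsLaminar

section Preorder

variable [Preorder ι] {S : ι → Finset X}

theorem comp_strictMono [Preorder κ] (hS : IsLaminar S) {f : κ → ι} (hf : StrictMono f) :
    IsLaminar (S ∘ f) :=
  fun _ _ _ h₁ h₂ => hS (hf h₁) (hf h₂)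

theorem sdiff (hS : IsLaminar S) (C : Finset X) : IsLaminar fun i => S i \ C := by
  intro i j₁ j₂ h₁ h₂
  calc S i \ C ∩ (S j₂ \ C) = (S i ∩ S j₂) \ C := inf_sdiff.symm
    _ ⊆ (S i ∩ S j₁) \ C := sdiff_subset_sdiff (hS h₁ h₂) subset_rfl
    _ = S i \ C ∩ (S j₁ \ C) := inf_sdiff

end Preorder

section PartialOrder

variable [PartialOrder ι] {S : ι → Finset X}

theorem inter_subset_inter (hS : IsLaminar S) {i j₁ j₂ : ι} (h₁ : i < j₁) (h₂ : j₁ ≤ j₂) :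
    S i ∩ S j₂ ⊆ S i ∩ S j₁ := by
  rcases h₂.eq_or_lt with rfl | h₂
  · exact subset_rfl
  · exact hS h₁ h₂

theorem mem_of_mem_inter (hS : IsLaminar S) {i j q : ι} {x : X} (hx : x ∈ S i ∩ S j)
    (hiq : i ≤ q) (hqj : q ≤ j) : x ∈ S q := by
  rcases hiq.eq_or_lt with rfl | hiq
  · exact mem_of_mem_inter_left hx
  · exact mem_of_mem_inter_right (hS.inter_subset_inter hiq hqj hx)

end PartialOrder

theorem isSunflower_of_covBy [LinearOrder ι] [IsStronglyAtomic ι] {T : ι → Finset X}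
    (hT : IsLaminar T) {C : Finset X} (hC : ∀ i, C ⊆ T i)
    (hcov : ∀ a b, a ⋖ b → T a ∩ T b = C) : IsSunflower T C := by
  have hlt : ∀ a b, a < b → T a ∩ T b = C := by
    intro a b hab
    obtain ⟨c, hac, hcb⟩ := exists_covBy_le_of_lt hab
    refine subset_antisymm ?_ (subset_inter (hC a) (hC b))
    exact (hT.inter_subset_inter hac.lt hcb).trans (hcov a c hac).le
  refine ⟨hC, fun a b hab => ?_⟩
  rcases hab.lt_or_gt with hab | hab
  · exact hlt a b hab
  · rw [inter_comm]
    exact hlt b a hab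

end IsLaminar

theorem IsSunflower.union_of_sdiff {T : ι → Finset X} {C K : Finset X}
    (h : IsSunflower (fun i => T i \ C) K) (hC : ∀ i, C ⊆ T i) : IsSunflower T (K ∪ C) := by
  refine ⟨fun i => union_subset ((h.1 i).trans sdiff_subset) (hC i), fun i j hij => ?_⟩
  calc T i ∩ T j = (T i ∩ T j) \ C ∪ C := (sdiff_union_of_subset (subset_inter (hC i) (hC j))).symm
    _ = K ∪ C := congrArg (· ∪ C) (inf_sdiff.trans (h.2 hij))

theorem mul_pow_add_lt_pow_succ {Z k a q : ℕ} (ha : a < Z) (hq : q < Z ^ k) :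
    a * Z ^ k + q < Z ^ (k + 1) :=
  calc a * Z ^ k + q < (a + 1) * Z ^ k := by linarith
    _ ≤ Z * Z ^ k := Nat.mul_le_mul_right _ ha
    _ = Z ^ (k + 1) := (pow_succ' Z k).symm

theorem exists_strictMono_isSunflower_of_isLaminar (Z k : ℕ) (S : Fin (Z ^ k) → Finset X)
    (hS : IsLaminar S) (hcard : ∀ i, (S i).card ≤ k) (hx : ∃ x, ∀ i, x ∈ S i) :
    ∃ (p : Fin Z → Fin (Z ^ k)) (K : Finset X), StrictMono p ∧ IsSunflower (S ∘ p) K := by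
  obtain ⟨x, hx⟩ := hx
  induction k generalizing x with
  | zero => simpa [card_eq_zero.mp (Nat.le_zero.mp (hcard 0))] using hx 0
  | succ k ih =>
    -- `e a` is the first index of the `a`-th block of length `Z ^ k`
    let e : Fin Z → Fin (Z ^ (k + 1)) := fun a =>
      ⟨a * Z ^ k, by simpa using mul_pow_add_lt_pow_succ a.2 (Nat.pow_pos (n := k) a.pos)⟩
    have he : StrictMono e := fun a b hab =>
      Nat.mul_lt_mul_of_lt_of_le hab le_rfl (Nat.pow_pos (n := k) b.pos)
    rcases isEmpty_or_nonempty (Fin Z) with _ | ⟨⟨a₀⟩⟩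
    · exact ⟨e, ∅, he, isEmptyElim, fun a => isEmptyElim a⟩
    set C := univ.inf' ⟨e a₀, mem_univ _⟩ S
    have hC : ∀ i, C ⊆ S i := fun i => inf'_le S (mem_univ i)
    have hcardC : 1 ≤ C.card := card_pos.mpr ⟨x, (mem_inf' _).mpr fun i _ => hx i⟩
    by_cases hcov : ∀ a b, a ⋖ b → S (e a) ∩ S (e b) = C
    · exact ⟨e, C, he, (hS.comp_strictMono he).isSunflower_of_covBy (fun a => hC (e a)) hcov⟩
    push Not at hcov
    obtain ⟨a, b, hab, hne⟩ := hcov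
    have hb : (b : ℕ) = a + 1 := (Nat.covBy_iff_add_one_eq.mp (Fin.covBy_iff.mp hab)).symm
    obtain ⟨y, hy, hyC⟩ :=
      exists_of_ssubset ((subset_inter (hC (e a)) (hC (e b))).ssubset_of_ne (Ne.symm hne))
    let f : Fin (Z ^ k) → Fin (Z ^ (k + 1)) := fun q =>
      ⟨a * Z ^ k + q, mul_pow_add_lt_pow_succ a.2 q.2⟩
    have hf : StrictMono f := fun q r hqr => Nat.add_lt_add_left hqr _
    have hyf : ∀ q, y ∈ S (f q) := fun q =>
      hS.mem_of_mem_inter hy (Fin.le_def.mpr (Nat.le_add_right _ _))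
        (Fin.le_def.mpr (by simp only [e, f, hb, add_mul, one_mul]; omega))
    obtain ⟨p, K, hp, hK⟩ := ih (fun q => S (f q) \ C) ((hS.comp_strictMono hf).sdiff C)
      (fun q => by rw [card_sdiff_of_subset (hC _)]; have := hcard (f q); omega)
      y fun q => mem_sdiff.mpr ⟨hyf q, hyC⟩
    exact ⟨f ∘ p, K ∪ C, hf.comp hp, hK.union_of_sdiff fun i => hC _⟩

end

/-- Combinatorial content of the same-intersection lemma: given `Z^k` sets
`S 1, …, S (Z^k)` of size at most `k` along a root-to-leaf path satisfying the
laminar-path condition, whose common intersection is nonempty, there are `Z`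
of them whose pairwise intersections all equal one common set `S₀` of size at
most `k`. -/
theorem same_intersection_of_long_path {X : Type*} [DecidableEq X] (k Z : ℕ)
    (S : Fin (Z ^ k) → Finset X)
    (hcard : ∀ i, (S i).Nonempty ∧ (S i).card ≤ k)
    (hlam : ∀ i j₁ j₂ : Fin (Z ^ k), i < j₁ → j₁ < j₂ → S i ∩ S j₂ ⊆ S i ∩ S j₁)
    (hint : ∃ x, ∀ i, x ∈ S i) :
    ∃ (p : Fin Z → Fin (Z ^ k)) (S₀ : Finset X), StrictMono p ∧ S₀.card ≤ k ∧
      ∀ i j : Fin Z, i ≠ j → S (p i) ∩ S (p j) = S₀ := by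
  obtain ⟨p, S₀, hp, hsub, hpair⟩ := exists_strictMono_isSunflower_of_isLaminar Z k S
    hlam (fun i => (hcard i).2) hint
  rcases isEmpty_or_nonempty (Fin Z) with _ | ⟨⟨i⟩⟩
  · exact ⟨p, ∅, hp, by simp, fun i => isEmptyElim i⟩
  · exact ⟨p, S₀, hp, (card_le_card (hsub i)).trans (hcard (p i)).2, fun _ _ h => hpair h⟩
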